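/- arXiv:math/0407396 — 3 statements merged into one kernel-verified Lean document; each statement's English description precedes it below -/
import Mathlib

section
/- Let β > 0 and κ > 0, let K̂ : ℝ → ℂ satisfy |K̂(ω)| ≥ κ (1 + ω²)^{−β/2} for all ω, and let φ̂ : ℝ → ℝ be measurable with ∫ (1 + ω²)^{β+3} |φ̂(ω)|² dω < ∞. Then there exists a constant C > 0 (depending only on κ, β and φ̂) such that for every h ∈ (0,1] and all t, s ∈ ℝ, ∫_{−∞}^{∞} (2πω)⁴ (|φ̂(ωh)|² / |K̂(ω)|²) |e^{2πiωt} − e^{2πiωs}|² dω ≤ C |t − s|² h^{−2β−7}. -/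
open MeasureTheory Real Set Filter

/-- `|e^{iθ} - 1| ≤ |θ|` for real `θ`. -/
lemma abs_exp_I_sub_one_le (θ : ℝ) :
    ‖Complex.exp (θ * Complex.I) - 1‖ ≤ |θ| := by
  have h1 : Complex.exp (θ * Complex.I) - 1 =
      ((Real.cos θ - 1 : ℝ) : ℂ) + ((Real.sin θ : ℝ) : ℂ) * Complex.I := by
    rw [Complex.exp_mul_I, ← Complex.ofReal_cos, ← Complex.ofReal_sin]
    push_cast; ring
  rw [h1, Complex.norm_add_mul_I]
  have hhalf : Real.sin (θ / 2) ^ 2 = (1 - Real.cos θ) / 2 := by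
    have h0 := Real.abs_sin_half θ
    have h2 : (0:ℝ) ≤ (1 - Real.cos θ) / 2 := by nlinarith [Real.cos_le_one θ]
    calc Real.sin (θ / 2) ^ 2 = |Real.sin (θ / 2)| ^ 2 := (sq_abs _).symm
      _ = Real.sqrt ((1 - Real.cos θ) / 2) ^ 2 := by rw [h0]
      _ = (1 - Real.cos θ) / 2 := Real.sq_sqrt h2
  have hle : (Real.cos θ - 1) ^ 2 + Real.sin θ ^ 2 ≤ θ ^ 2 := by
    nlinarith [Real.sin_sq_add_cos_sq θ, Real.sin_sq_le_sq (x := θ / 2)]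
  calc Real.sqrt ((Real.cos θ - 1) ^ 2 + Real.sin θ ^ 2) ≤ Real.sqrt (θ ^ 2) :=
        Real.sqrt_le_sqrt hle
    _ = |θ| := Real.sqrt_sq_eq_abs θ

/-- `|e^{ia} - e^{ib}| ≤ |a - b|` for real `a, b`. -/
lemma abs_exp_I_sub_exp_I_le (a b : ℝ) :
    ‖Complex.exp (a * Complex.I) - Complex.exp (b * Complex.I)‖ ≤ |a - b| := by
  have key : Complex.exp (a * Complex.I) - Complex.exp (b * Complex.I) =
      Complex.exp (b * Complex.I) * (Complex.exp ((a - b : ℝ) * Complex.I) - 1) := by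
    rw [mul_sub, mul_one, ← Complex.exp_add]
    push_cast; ring_nf
  rw [key, norm_mul, Complex.norm_exp_ofReal_mul_I, one_mul]
  exact abs_exp_I_sub_one_le (a - b)

set_option maxHeartbeats 1000000 in
/-- Increment-variance bound from the proof of Lemma 1: if
`|K̂(ω)| ≥ κ (1+ω²)^{-β/2}` and `∫ (1+ω²)^{β+3} |φ̂(ω)|² dω < ∞`, then there is
`C > 0` (depending only on `κ, β, φ̂`) with
`∫ (2πω)⁴ (|φ̂(ωh)|²/|K̂(ω)|²) |e^{2πiωt} - e^{2πiωs}|² dω ≤ C |t-s|² h^{-2β-7}`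
for all `h ∈ (0,1]` and `t, s ∈ ℝ`. -/
theorem increment_variance_bound (β κ : ℝ) (hβ : 0 < β) (hκ : 0 < κ)
    (Khat : ℝ → ℂ) (hK : ∀ ω : ℝ, κ * (1 + ω ^ 2) ^ (-β / 2) ≤ ‖Khat ω‖)
    (φhat : ℝ → ℝ) (hmeas : Measurable φhat)
    (hφ : Integrable (fun ω : ℝ => (1 + ω ^ 2) ^ (β + 3) * (φhat ω) ^ 2)
      (volume : Measure ℝ)) :
    ∃ C : ℝ, 0 < C ∧ ∀ h : ℝ, 0 < h → h ≤ 1 → ∀ t s : ℝ,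
      ∫ ω : ℝ, (2 * Real.pi * ω) ^ 4 * ((φhat (ω * h)) ^ 2 / (‖Khat ω‖) ^ 2) *
          (‖Complex.exp (2 * Real.pi * Complex.I * ω * t)
            - Complex.exp (2 * Real.pi * Complex.I * ω * s)‖) ^ 2 ≤
        C * |t - s| ^ 2 * h ^ (-2 * β - 7) := by
  set g : ℝ → ℝ := fun u => (1 + u ^ 2) ^ (β + 3) * (φhat u) ^ 2 with hg
  set Iφ : ℝ := ∫ u : ℝ, g u with hIφ
  have hgnn : ∀ u, 0 ≤ g u := fun u =>
    mul_nonneg (Real.rpow_nonneg (by positivity) _) (sq_nonneg _)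
  have hIφnn : 0 ≤ Iφ := integral_nonneg hgnn
  set A : ℝ := (2 * Real.pi) ^ 6 / κ ^ 2 with hA
  have hApos : 0 < A := by positivity
  refine ⟨A * (Iφ + 1), by positivity, ?_⟩
  intro h hh0 hh1 t s
  set M : ℝ → ℝ := fun ω => A * (t - s) ^ 2 * h ^ (-2 * β - 6 : ℝ) * g (ω * h) with hM
  have hMint : Integrable M := by
    exact ((hφ.comp_mul_right' (ne_of_gt hh0)).const_mul _)
  have hptwise : ∀ ω : ℝ,
      (2 * Real.pi * ω) ^ 4 * ((φhat (ω * h)) ^ 2 / (‖Khat ω‖) ^ 2) *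
        (‖Complex.exp (2 * Real.pi * Complex.I * ω * t)
          - Complex.exp (2 * Real.pi * Complex.I * ω * s)‖) ^ 2 ≤ M ω := by
    intro ω
    have hKpos : 0 < ‖Khat ω‖ :=
      lt_of_lt_of_le (by positivity) (hK ω)
    -- bound on the exponential difference
    have hexp : (‖Complex.exp (2 * Real.pi * Complex.I * ω * t)
          - Complex.exp (2 * Real.pi * Complex.I * ω * s)‖) ^ 2
        ≤ (2 * Real.pi) ^ 2 * ω ^ 2 * (t - s) ^ 2 := by
      have h1 : (2 * Real.pi * Complex.I * (ω : ℂ) * (t : ℂ)) =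
          ((2 * Real.pi * ω * t : ℝ) : ℂ) * Complex.I := by push_cast; ring
      have h2 : (2 * Real.pi * Complex.I * (ω : ℂ) * (s : ℂ)) =
          ((2 * Real.pi * ω * s : ℝ) : ℂ) * Complex.I := by push_cast; ring
      have hb := abs_exp_I_sub_exp_I_le (2 * Real.pi * ω * t) (2 * Real.pi * ω * s)
      rw [← h1, ← h2] at hb
      have habs : |2 * Real.pi * ω * t - 2 * Real.pi * ω * s| = |2 * Real.pi * ω| * |t - s| := by
        rw [← abs_mul]; ring_nf
      have hsqb := pow_le_pow_left₀ (norm_nonneg _) hb 2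
      calc (‖Complex.exp (2 * Real.pi * Complex.I * ω * t)
            - Complex.exp (2 * Real.pi * Complex.I * ω * s)‖) ^ 2
          ≤ |2 * Real.pi * ω * t - 2 * Real.pi * ω * s| ^ 2 := hsqb
        _ = (2 * Real.pi) ^ 2 * ω ^ 2 * (t - s) ^ 2 := by
            rw [habs, mul_pow, sq_abs, sq_abs]; ring
    -- bound on 1/|Khat|^2
    have hKsq : κ ^ 2 * ((1 + ω ^ 2) ^ (-β / 2 : ℝ)) ^ 2 ≤ (‖Khat ω‖) ^ 2 := by
      have h0 : (0:ℝ) ≤ κ * (1 + ω ^ 2) ^ (-β / 2 : ℝ) := by positivity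
      have h2 := mul_self_le_mul_self h0 (hK ω)
      nlinarith [h2]
    have hKinv : (φhat (ω * h)) ^ 2 / (‖Khat ω‖) ^ 2
        ≤ (φhat (ω * h)) ^ 2 * (κ⁻¹ ^ 2 * (1 + ω ^ 2) ^ (β : ℝ)) := by
      have h1ω : (0:ℝ) < 1 + ω ^ 2 := by positivity
      have hrw : ((1 + ω ^ 2) ^ (-β / 2 : ℝ)) ^ 2 = (1 + ω ^ 2) ^ (-β : ℝ) := by
        rw [← Real.rpow_natCast ((1 + ω ^ 2) ^ (-β / 2 : ℝ)) 2, ← Real.rpow_mul h1ω.le]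
        norm_num
      rw [hrw] at hKsq
      have hpos : (0:ℝ) < κ ^ 2 * (1 + ω ^ 2) ^ (-β : ℝ) := by
        positivity
      have hdiv : (φhat (ω * h)) ^ 2 / (‖Khat ω‖) ^ 2
          ≤ (φhat (ω * h)) ^ 2 / (κ ^ 2 * (1 + ω ^ 2) ^ (-β : ℝ)) :=
        div_le_div_of_nonneg_left (sq_nonneg _) hpos hKsq
      refine hdiv.trans_eq ?_
      rw [div_eq_mul_inv, mul_inv, ← Real.rpow_neg h1ω.le, neg_neg]
      ring
    -- combine
    have hnn4 : (0:ℝ) ≤ (2 * Real.pi * ω) ^ 4 := by positivity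
    have step1 : (2 * Real.pi * ω) ^ 4 * ((φhat (ω * h)) ^ 2 / (‖Khat ω‖) ^ 2) *
        (‖Complex.exp (2 * Real.pi * Complex.I * ω * t)
          - Complex.exp (2 * Real.pi * Complex.I * ω * s)‖) ^ 2
        ≤ (2 * Real.pi * ω) ^ 4 * ((φhat (ω * h)) ^ 2 * (κ⁻¹ ^ 2 * (1 + ω ^ 2) ^ (β : ℝ))) *
          ((2 * Real.pi) ^ 2 * ω ^ 2 * (t - s) ^ 2) := by
      apply mul_le_mul
      · exact mul_le_mul_of_nonneg_left hKinv hnn4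
      · exact hexp
      · positivity
      · positivity
    refine step1.trans ?_
    -- (2πω)^4 * (2π)^2 ω^2 = (2π)^6 ω^6 ≤ (2π)^6 (1+ω²)^3
    have hω6 : ω ^ 6 ≤ (1 + ω ^ 2) ^ (3 : ℝ) := by
      rw [show ((3:ℝ)) = ((3:ℕ):ℝ) by norm_num, Real.rpow_natCast]
      nlinarith [sq_nonneg ω, sq_nonneg (ω ^ 2), sq_nonneg (1 + ω ^ 2), sq_nonneg (ω^2 - 1)]
    have hrpow_split : (1 + ω ^ 2) ^ (β : ℝ) * (1 + ω ^ 2) ^ (3 : ℝ) =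
        (1 + ω ^ 2) ^ (β + 3 : ℝ) := by
      rw [← Real.rpow_add (by positivity)]
    have step2 : (2 * Real.pi * ω) ^ 4 * ((φhat (ω * h)) ^ 2 * (κ⁻¹ ^ 2 * (1 + ω ^ 2) ^ (β : ℝ))) *
          ((2 * Real.pi) ^ 2 * ω ^ 2 * (t - s) ^ 2)
        ≤ A * (t - s) ^ 2 * ((1 + ω ^ 2) ^ (β + 3 : ℝ) * (φhat (ω * h)) ^ 2) := by
      have e1 : (2 * Real.pi * ω) ^ 4 * ((φhat (ω * h)) ^ 2 * (κ⁻¹ ^ 2 * (1 + ω ^ 2) ^ (β : ℝ))) *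
          ((2 * Real.pi) ^ 2 * ω ^ 2 * (t - s) ^ 2)
          = (2 * Real.pi) ^ 6 * κ⁻¹ ^ 2 * (t - s) ^ 2 * (φhat (ω * h)) ^ 2 *
            ((1 + ω ^ 2) ^ (β : ℝ) * ω ^ 6) := by ring
      rw [e1, ← hrpow_split]
      have e2 : A * (t - s) ^ 2 * ((1 + ω ^ 2) ^ (β : ℝ) * (1 + ω ^ 2) ^ (3 : ℝ) *
          (φhat (ω * h)) ^ 2) = (2 * Real.pi) ^ 6 * κ⁻¹ ^ 2 * (t - s) ^ 2 * (φhat (ω * h)) ^ 2 *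
            ((1 + ω ^ 2) ^ (β : ℝ) * (1 + ω ^ 2) ^ (3 : ℝ)) := by
        rw [hA]; field_simp
      rw [e2]
      apply mul_le_mul_of_nonneg_left
      · exact mul_le_mul_of_nonneg_left hω6 (Real.rpow_nonneg (by positivity) _)
      · positivity
    refine step2.trans ?_
    -- (1+ω²)^{β+3} ≤ h^{-2β-6} (1+(ωh)²)^{β+3}
    have hbase : 1 + ω ^ 2 ≤ h ^ (-2 : ℝ) * (1 + (ω * h) ^ 2) := by
      have h2 : (0:ℝ) < h ^ 2 := by positivity
      have hrw : h ^ (-2 : ℝ) = (h ^ 2)⁻¹ := by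
        rw [show ((-2:ℝ)) = -((2:ℕ):ℝ) by norm_num, Real.rpow_neg hh0.le, Real.rpow_natCast]
      rw [hrw]
      have hh2 : h ^ 2 ≤ 1 := by nlinarith
      have key : h ^ 2 * (1 + ω ^ 2) ≤ 1 + (ω * h) ^ 2 := by
        calc h ^ 2 * (1 + ω ^ 2) = h ^ 2 + (ω * h) ^ 2 := by ring
          _ ≤ 1 + (ω * h) ^ 2 := by linarith
      calc 1 + ω ^ 2 = (h ^ 2)⁻¹ * (h ^ 2 * (1 + ω ^ 2)) := by field_simp
        _ ≤ (h ^ 2)⁻¹ * (1 + (ω * h) ^ 2) :=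
            mul_le_mul_of_nonneg_left key (by positivity)
    have hpow : (1 + ω ^ 2) ^ (β + 3 : ℝ) ≤
        h ^ (-2 * β - 6 : ℝ) * (1 + (ω * h) ^ 2) ^ (β + 3 : ℝ) := by
      have h1 : (1 + ω ^ 2) ^ (β + 3 : ℝ) ≤
          (h ^ (-2 : ℝ) * (1 + (ω * h) ^ 2)) ^ (β + 3 : ℝ) :=
        Real.rpow_le_rpow (by positivity) hbase (by linarith)
      refine h1.trans_eq ?_
      rw [Real.mul_rpow (Real.rpow_nonneg hh0.le _) (by positivity),
        ← Real.rpow_mul hh0.le]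
      congr 2
      ring
    calc A * (t - s) ^ 2 * ((1 + ω ^ 2) ^ (β + 3 : ℝ) * (φhat (ω * h)) ^ 2)
        ≤ A * (t - s) ^ 2 * (h ^ (-2 * β - 6 : ℝ) * (1 + (ω * h) ^ 2) ^ (β + 3 : ℝ) *
            (φhat (ω * h)) ^ 2) := by
          apply mul_le_mul_of_nonneg_left _ (by positivity)
          exact mul_le_mul_of_nonneg_right hpow (sq_nonneg _)
      _ = M ω := by simp only [hM, hg]; ring
  -- integrate
  have hint_le : (∫ ω : ℝ, (2 * Real.pi * ω) ^ 4 * ((φhat (ω * h)) ^ 2 /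
        (‖Khat ω‖) ^ 2) *
        (‖Complex.exp (2 * Real.pi * Complex.I * ω * t)
          - Complex.exp (2 * Real.pi * Complex.I * ω * s)‖) ^ 2) ≤ ∫ ω : ℝ, M ω := by
    apply integral_mono_of_nonneg
    · exact Eventually.of_forall fun ω => by positivity
    · exact hMint
    · exact Eventually.of_forall hptwise
  refine hint_le.trans ?_
  have hMval : (∫ ω : ℝ, M ω) = A * (t - s) ^ 2 * h ^ (-2 * β - 6 : ℝ) * (|h⁻¹| * Iφ) := by
    simp only [hM]
    rw [MeasureTheory.integral_const_mul]
    congr 1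
    rw [MeasureTheory.Measure.integral_comp_mul_right g h, smul_eq_mul, hIφ]
  rw [hMval]
  have habs : |h⁻¹| = h⁻¹ := abs_of_pos (by positivity)
  rw [habs]
  have hpow7 : h ^ (-2 * β - 6 : ℝ) * h⁻¹ = h ^ (-2 * β - 7 : ℝ) := by
    rw [show h⁻¹ = h ^ (-1 : ℝ) by rw [Real.rpow_neg_one], ← Real.rpow_add hh0]
    congr 1
    ring
  have e : A * (t - s) ^ 2 * h ^ (-2 * β - 6 : ℝ) * (h⁻¹ * Iφ) =
      A * Iφ * (t - s) ^ 2 * (h ^ (-2 * β - 6 : ℝ) * h⁻¹) := by ring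
  rw [e, hpow7, ← sq_abs (t - s)]
  have hle : A * Iφ ≤ A * (Iφ + 1) := by nlinarith
  have hnn : (0:ℝ) ≤ |t - s| ^ 2 * h ^ (-2 * β - 7 : ℝ) := by positivity
  calc A * Iφ * |t - s| ^ 2 * h ^ (-2 * β - 7 : ℝ)
      = (A * Iφ) * (|t - s| ^ 2 * h ^ (-2 * β - 7 : ℝ)) := by ring
    _ ≤ (A * (Iφ + 1)) * (|t - s| ^ 2 * h ^ (-2 * β - 7 : ℝ)) :=
        mul_le_mul_of_nonneg_right hle hnn
    _ = A * (Iφ + 1) * |t - s| ^ 2 * h ^ (-2 * β - 7 : ℝ) := by ring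
end

section
/- Let k ≥ 1 and let b_1, …, b_k be nonzero real numbers. Define v(x) = e^x for x < 0, v(0) = 1/2, v(x) = 0 for x > 0; let v_j(x) = |b_j| v(b_j x) for j = 1, …, k, and let K = v_1 * v_2 * … * v_k (convolution on ℝ). Then K ∈ L¹(ℝ), |K̂(ω)| = ∏_{j=1}^{k} (1 + (2πω/b_j)²)^{−1/2} for all ω ∈ ℝ, and consequently there exist constants κ, κ̄ > 0 such that κ (1 + ω²)^{−k/2} ≤ |K̂(ω)| ≤ κ̄ (1 + ω²)^{−k/2} for all ω ∈ ℝ; that is, K satisfies Assumption K with ill-posedness index β = k. -/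
open MeasureTheory Real Set Filter

noncomputable def FT (g : ℝ → ℝ) (ω : ℝ) : ℂ :=
  ∫ x : ℝ, (g x : ℂ) * Complex.exp (2 * Real.pi * Complex.I * ω * x)

/-- Convolution on `ℝ`: `(f * g)(x) = ∫ f(x - y) g(y) dy`. -/
noncomputable def conv (f g : ℝ → ℝ) (x : ℝ) : ℝ :=
  ∫ y : ℝ, f (x - y) * g y

/-- Iterated convolution `v 0 * v 1 * ⋯ * v n`. -/
noncomputable def convIter (v : ℕ → ℝ → ℝ) : ℕ → ℝ → ℝ
  | 0 => v 0
  | n + 1 => conv (v (n + 1)) (convIter v n)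

/-- The one-sided exponential kernel `v(x) = eˣ` for `x < 0`, `v(0) = 1/2`,
`v(x) = 0` for `x > 0`. -/
noncomputable def expKernel (x : ℝ) : ℝ :=
  if x < 0 then Real.exp x else if x = 0 then 1/2 else 0

open Topology
open scoped Convolution

lemma expKernel_ae : (fun x : ℝ => expKernel x) =ᵐ[volume] (Iic (0:ℝ)).indicator Real.exp := by
  have : ({(0:ℝ)} : Set ℝ)ᶜ ∈ (ae (volume : Measure ℝ)) := by
    refine compl_mem_ae_iff.2 ?_
    simp
  filter_upwards [this] with x hx
  have hx0 : x ≠ 0 := by simpa using hx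
  unfold expKernel
  rcases lt_trichotomy x 0 with h | h | h
  · rw [if_pos h, indicator_of_mem (Set.mem_Iic.mpr h.le)]
  · exact absurd h hx0
  · rw [if_neg (not_lt.2 h.le), if_neg hx0, indicator_of_notMem (by simpa using h.not_ge)]

lemma integrable_expKernel : Integrable expKernel := by
  refine (IntegrableOn.integrable_indicator (integrableOn_exp_Iic 0) measurableSet_Iic).congr
    expKernel_ae.symm

lemma FT_expKernel (s : ℝ) :
    FT expKernel s = 1 / (1 + 2 * Real.pi * Complex.I * s) := by
  set a : ℂ := 1 + 2 * Real.pi * Complex.I * s with ha_def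
  have ha_re : a.re = 1 := by simp [ha_def]
  have ha : a ≠ 0 := fun h => by simp [h] at ha_re
  have hnorm : ∀ x : ℝ, ‖Complex.exp (a * x)‖ = Real.exp x := by
    intro x
    rw [Complex.norm_exp]
    congr 1
    simp [Complex.mul_re, ha_re]
  have h2 : IntegrableOn (fun x : ℝ => Complex.exp (a * x)) (Iic 0) := by
    refine Integrable.mono' (integrableOn_exp_Iic 0)
      ((Complex.continuous_exp.comp (continuous_const.mul Complex.continuous_ofReal)).aestronglyMeasurable.restrict) ?_
    filter_upwards with x using le_of_eq (hnorm x)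
  have h1 : FT expKernel s = ∫ x in Iic (0:ℝ), Complex.exp (a * x) := by
    rw [FT, ← integral_indicator measurableSet_Iic]
    refine integral_congr_ae ?_
    filter_upwards [expKernel_ae] with x hx
    rw [hx]
    by_cases hmem : x ∈ Iic (0:ℝ)
    · rw [indicator_of_mem hmem, indicator_of_mem hmem]
      rw [Complex.ofReal_exp, ← Complex.exp_add]
      rw [ha_def]; ring_nf
    · rw [indicator_of_notMem hmem, indicator_of_notMem hmem]
      simp
  have h3 : Tendsto (fun y : ℝ => ∫ x in y..0, Complex.exp (a * x)) atBot
      (𝓝 (∫ x in Iic (0:ℝ), Complex.exp (a * x))) :=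
    intervalIntegral_tendsto_integral_Iic 0 h2 tendsto_id
  have h4 : Tendsto (fun y : ℝ => ∫ x in y..0, Complex.exp (a * x)) atBot (𝓝 (1 / a)) := by
    have : ∀ y : ℝ, (∫ x in y..0, Complex.exp (a * x)) = (1 - Complex.exp (a * y)) / a := by
      intro y
      rw [integral_exp_mul_complex ha]
      norm_num
    simp_rw [this]
    have hlim : Tendsto (fun y : ℝ => Complex.exp (a * y)) atBot (𝓝 0) := by
      rw [tendsto_zero_iff_norm_tendsto_zero]
      simp_rw [hnorm]
      exact Real.tendsto_exp_atBot
    have := (tendsto_const_nhds (x := (1:ℂ)) (f := atBot)).sub hlim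
    simpa using this.div_const a
  rw [h1, tendsto_nhds_unique h3 h4]

lemma integrable_scaled {b : ℝ} (hb : b ≠ 0) :
    Integrable (fun x : ℝ => |b| * expKernel (b * x)) :=
  ((integrable_expKernel.comp_mul_left' hb).const_mul |b|)

lemma FT_scaled {b : ℝ} (hb : b ≠ 0) (ω : ℝ) :
    FT (fun x : ℝ => |b| * expKernel (b * x)) ω
      = 1 / (1 + 2 * Real.pi * Complex.I * (ω / b)) := by
  have key : ∀ x : ℝ, ((|b| * expKernel (b * x) : ℝ) : ℂ)
      * Complex.exp (2 * Real.pi * Complex.I * ω * x)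
      = (fun u : ℝ => ((|b| * expKernel u : ℝ) : ℂ)
          * Complex.exp (2 * Real.pi * Complex.I * (ω / b) * u)) (b * x) := by
    intro x
    simp only
    have hbc : (b:ℂ) ≠ 0 := by exact_mod_cast hb
    congr 2
    push_cast
    field_simp
  rw [FT]
  simp_rw [key]
  rw [MeasureTheory.Measure.integral_comp_mul_left
    (fun u : ℝ => ((|b| * expKernel u : ℝ) : ℂ)
      * Complex.exp (2 * Real.pi * Complex.I * (ω / b) * u)) b]
  have : (∫ u : ℝ, ((|b| * expKernel u : ℝ) : ℂ)
      * Complex.exp (2 * Real.pi * Complex.I * (ω / b) * u))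
      = ((|b| : ℝ) : ℂ) * FT expKernel (ω / b) := by
    rw [FT, ← integral_const_mul]
    congr 1 with u
    push_cast
    ring
  have hb2 : ((|b| : ℝ) : ℂ) ≠ 0 := by
    simpa using abs_ne_zero.mpr hb
  rw [this, FT_expKernel, Complex.real_smul, abs_inv, Complex.ofReal_inv,
    inv_mul_cancel_left₀ hb2]
  norm_cast

lemma abs_one_div_lin (s : ℝ) :
    ‖(1 / (1 + 2 * Real.pi * Complex.I * s) : ℂ)‖
      = (1 + (2 * Real.pi * s) ^ 2) ^ (-(1:ℝ)/2) := by
  have h0 : (0:ℝ) ≤ 1 + (2 * Real.pi * s) ^ 2 := by positivity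
  rw [norm_div, norm_one]
  have habs : ‖(1 + 2 * Real.pi * Complex.I * s : ℂ)‖
      = Real.sqrt (1 + (2 * Real.pi * s) ^ 2) := by
    rw [Complex.norm_def, Complex.normSq_apply]
    congr 1
    simp [Complex.add_re, Complex.add_im, Complex.mul_re, Complex.mul_im]
    ring
  rw [habs, Real.sqrt_eq_rpow, one_div, ← Real.rpow_neg h0]
  norm_num

lemma conv_eq_convolution (f g : ℝ → ℝ) :
    conv f g = f ⋆[ContinuousLinearMap.mul ℝ ℝ] g := by
  ext x
  rw [conv, convolution_def]
  simp only [ContinuousLinearMap.mul_apply']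
  rw [← integral_sub_left_eq_self (fun t : ℝ => f t * g (x - t)) volume x]
  simp

lemma integrable_conv {f g : ℝ → ℝ} (hf : Integrable f) (hg : Integrable g) :
    Integrable (conv f g) := by
  rw [conv_eq_convolution]
  exact Integrable.integrable_convolution (L := ContinuousLinearMap.mul ℝ ℝ) hf hg

lemma Enorm (ω x : ℝ) : ‖Complex.exp (2 * Real.pi * Complex.I * ω * x)‖ = 1 := by
  rw [Complex.norm_exp]
  have : (2 * (Real.pi:ℂ) * Complex.I * ω * x).re = 0 := by simp
  rw [this, Real.exp_zero]

lemma FT_conv {f g : ℝ → ℝ} (hf : Integrable f) (hg : Integrable g) (ω : ℝ) :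
    FT (conv f g) ω = FT f ω * FT g ω := by
  have hI : Integrable (fun p : ℝ × ℝ => g p.2 * f (p.1 - p.2)) (volume.prod volume) := by
    simpa using hg.convolution_integrand (ContinuousLinearMap.mul ℝ ℝ) hf
  have hF : Integrable (fun p : ℝ × ℝ => ((g p.2 * f (p.1 - p.2) : ℝ) : ℂ)
      * Complex.exp (2 * Real.pi * Complex.I * ω * p.1)) (volume.prod volume) := by
    have hEcont : Continuous fun x : ℝ => Complex.exp (2 * Real.pi * Complex.I * ω * x) :=
      Complex.continuous_exp.comp (continuous_const.mul Complex.continuous_ofReal)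
    refine Integrable.mono' hI.norm ?_ ?_
    · exact (Complex.continuous_ofReal.comp_aestronglyMeasurable
        hI.aestronglyMeasurable).mul (hEcont.comp continuous_fst).aestronglyMeasurable
    · filter_upwards with p
      rw [norm_mul, Enorm]
      simp
  have step1 : FT (conv f g) ω
      = ∫ x : ℝ, ∫ y : ℝ, ((g y * f (x - y) : ℝ) : ℂ)
          * Complex.exp (2 * Real.pi * Complex.I * ω * x) := by
    rw [FT]
    congr 1 with x
    have hcast : ((conv f g x : ℝ) : ℂ) = ∫ y : ℝ, ((f (x - y) * g y : ℝ) : ℂ) := by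
      rw [conv]
      exact (integral_ofReal (𝕜 := ℂ)).symm
    rw [hcast, ← integral_mul_const]
    congr 1 with y
    push_cast
    ring
  have step2 : (∫ x : ℝ, ∫ y : ℝ, ((g y * f (x - y) : ℝ) : ℂ)
          * Complex.exp (2 * Real.pi * Complex.I * ω * x))
      = ∫ y : ℝ, ∫ x : ℝ, ((g y * f (x - y) : ℝ) : ℂ)
          * Complex.exp (2 * Real.pi * Complex.I * ω * x) :=
    integral_integral_swap hF
  have step3 : ∀ y : ℝ, (∫ x : ℝ, ((g y * f (x - y) : ℝ) : ℂ)
          * Complex.exp (2 * Real.pi * Complex.I * ω * x))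
      = ((g y : ℝ) : ℂ) * Complex.exp (2 * Real.pi * Complex.I * ω * y) * FT f ω := by
    intro y
    have key : ∀ x : ℝ, ((g y * f (x - y) : ℝ) : ℂ)
          * Complex.exp (2 * Real.pi * Complex.I * ω * x)
        = ((g y : ℝ) : ℂ) * Complex.exp (2 * Real.pi * Complex.I * ω * y)
          * (((f (x - y) : ℝ) : ℂ) * Complex.exp (2 * Real.pi * Complex.I * ω * ((x - y : ℝ) : ℂ))) := by
      intro x
      have hsplit : Complex.exp (2 * Real.pi * Complex.I * ω * x)
          = Complex.exp (2 * Real.pi * Complex.I * ω * y)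
            * Complex.exp (2 * Real.pi * Complex.I * ω * ((x - y : ℝ) : ℂ)) := by
        rw [← Complex.exp_add]
        congr 1
        push_cast
        ring
      rw [hsplit]
      push_cast
      ring
    simp_rw [key]
    rw [integral_const_mul]
    have := integral_sub_right_eq_self (μ := (volume : Measure ℝ))
      (fun t : ℝ => ((f t : ℝ) : ℂ) * Complex.exp (2 * Real.pi * Complex.I * ω * t)) y
    rw [this, FT]
  rw [step1, step2]
  simp_rw [step3]
  rw [integral_mul_const]
  simp only [FT]
  ring

lemma convIter_spec (b : ℕ → ℝ) (n : ℕ) (hb : ∀ j : ℕ, j ≤ n → b j ≠ 0) :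
    Integrable (convIter (fun j x => |b j| * expKernel (b j * x)) n) (volume : Measure ℝ) ∧
    ∀ ω : ℝ, FT (convIter (fun j x => |b j| * expKernel (b j * x)) n) ω
      = ∏ j ∈ Finset.range (n + 1), (1 / (1 + 2 * Real.pi * Complex.I * (ω / b j))) := by
  induction n with
  | zero =>
    refine ⟨integrable_scaled (hb 0 le_rfl), fun ω => ?_⟩
    rw [show convIter (fun j x => |b j| * expKernel (b j * x)) 0
      = fun x => |b 0| * expKernel (b 0 * x) from rfl]
    rw [FT_scaled (hb 0 le_rfl)]
    simp
  | succ n ih =>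
    obtain ⟨ihI, ihF⟩ := ih (fun j hj => hb j (hj.trans (Nat.le_succ n)))
    have hbn : b (n + 1) ≠ 0 := hb (n + 1) le_rfl
    have hInt : Integrable (convIter (fun j x => |b j| * expKernel (b j * x)) (n + 1)) := by
      rw [show convIter (fun j x => |b j| * expKernel (b j * x)) (n + 1)
        = conv (fun x => |b (n+1)| * expKernel (b (n+1) * x))
            (convIter (fun j x => |b j| * expKernel (b j * x)) n) from rfl]
      exact integrable_conv (integrable_scaled hbn) ihI
    refine ⟨hInt, fun ω => ?_⟩
    rw [show convIter (fun j x => |b j| * expKernel (b j * x)) (n + 1)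
      = conv (fun x => |b (n+1)| * expKernel (b (n+1) * x))
          (convIter (fun j x => |b j| * expKernel (b j * x)) n) from rfl]
    rw [FT_conv (integrable_scaled hbn) ihI, FT_scaled hbn, ihF, mul_comm]
    exact (Finset.prod_range_succ _ (n + 1)).symm

lemma factor_lb {c : ℝ} (hc : 0 < c) (ω : ℝ) :
    (max 1 c) ^ (-(1:ℝ)/2) * (1 + ω ^ 2) ^ (-(1:ℝ)/2) ≤ (1 + c * ω ^ 2) ^ (-(1:ℝ)/2) := by
  have h1 : (0:ℝ) < 1 + c * ω ^ 2 := by positivity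
  have h2 : 1 + c * ω ^ 2 ≤ max 1 c * (1 + ω ^ 2) := by
    have := le_max_left 1 c
    have := le_max_right 1 c
    nlinarith [sq_nonneg ω]
  have h3 : (max 1 c * (1 + ω ^ 2)) ^ (-(1:ℝ)/2) ≤ (1 + c * ω ^ 2) ^ (-(1:ℝ)/2) :=
    Real.rpow_le_rpow_of_nonpos h1 h2 (by norm_num)
  calc (max 1 c) ^ (-(1:ℝ)/2) * (1 + ω ^ 2) ^ (-(1:ℝ)/2)
      = (max 1 c * (1 + ω ^ 2)) ^ (-(1:ℝ)/2) :=
        (Real.mul_rpow (by positivity) (by positivity)).symm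
    _ ≤ _ := h3

lemma factor_ub {c : ℝ} (hc : 0 < c) (ω : ℝ) :
    (1 + c * ω ^ 2) ^ (-(1:ℝ)/2) ≤ (min 1 c) ^ (-(1:ℝ)/2) * (1 + ω ^ 2) ^ (-(1:ℝ)/2) := by
  have hmin : (0:ℝ) < min 1 c := lt_min one_pos hc
  have h2 : min 1 c * (1 + ω ^ 2) ≤ 1 + c * ω ^ 2 := by
    have := min_le_left 1 c
    have := min_le_right 1 c
    nlinarith [sq_nonneg ω]
  calc (1 + c * ω ^ 2) ^ (-(1:ℝ)/2)
      ≤ (min 1 c * (1 + ω ^ 2)) ^ (-(1:ℝ)/2) :=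
        Real.rpow_le_rpow_of_nonpos (by positivity) h2 (by norm_num)
    _ = (min 1 c) ^ (-(1:ℝ)/2) * (1 + ω ^ 2) ^ (-(1:ℝ)/2) :=
        Real.mul_rpow hmin.le (by positivity)

lemma rpow_half_pow (t : ℝ) (ht : 0 ≤ t) (k : ℕ) :
    (t ^ (-(1:ℝ)/2)) ^ k = t ^ (-(k:ℝ)/2) := by
  rw [← Real.rpow_natCast (t ^ (-(1:ℝ)/2)) k, ← Real.rpow_mul ht]
  congr 1
  ring

/-- Example (7): for nonzero reals `b₁, …, b_k`, the kernel
`K = v₁ * ⋯ * v_k` with `v_j(x) = |b_j| v(b_j x)` is in `L¹(ℝ)`, its Fourier transform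
satisfies `|K̂(ω)| = ∏_j (1 + (2πω/b_j)²)^{-1/2}`, and `K` satisfies Assumption K with
ill-posedness index `β = k`. -/
theorem green_kernel_assumptionK (k : ℕ) (hk : 1 ≤ k) (b : ℕ → ℝ)
    (hb : ∀ j : ℕ, j < k → b j ≠ 0) :
    Integrable (convIter (fun j x => |b j| * expKernel (b j * x)) (k - 1))
      (volume : Measure ℝ) ∧
    (∀ ω : ℝ,
      ‖FT (convIter (fun j x => |b j| * expKernel (b j * x)) (k - 1)) ω‖ =
        ∏ j ∈ Finset.range k, (1 + (2 * Real.pi * ω / b j) ^ 2) ^ (-(1 : ℝ)/2)) ∧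
    ∃ κ κ' : ℝ, 0 < κ ∧ 0 < κ' ∧ ∀ ω : ℝ,
      κ * (1 + ω ^ 2) ^ (-(k : ℝ)/2) ≤
        ‖FT (convIter (fun j x => |b j| * expKernel (b j * x)) (k - 1)) ω‖ ∧
      ‖FT (convIter (fun j x => |b j| * expKernel (b j * x)) (k - 1)) ω‖ ≤
        κ' * (1 + ω ^ 2) ^ (-(k : ℝ)/2) := by
  have hb' : ∀ j : ℕ, j ≤ k - 1 → b j ≠ 0 := fun j hj => hb j (by omega)
  obtain ⟨hInt, hFT⟩ := convIter_spec b (k - 1) hb'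
  have hk1 : k - 1 + 1 = k := by omega
  rw [hk1] at hFT
  have hcpos : ∀ j : ℕ, j < k → 0 < (2 * Real.pi / b j) ^ 2 := fun j hj =>
    pow_two_pos_of_ne_zero (div_ne_zero (by positivity) (hb j hj))
  have hsq : ∀ (j : ℕ) (ω : ℝ), (2 * Real.pi * ω / b j) ^ 2
      = (2 * Real.pi / b j) ^ 2 * ω ^ 2 := by
    intro j ω
    ring
  have habs : ∀ ω : ℝ,
      ‖FT (convIter (fun j x => |b j| * expKernel (b j * x)) (k - 1)) ω‖ =
        ∏ j ∈ Finset.range k, (1 + (2 * Real.pi * ω / b j) ^ 2) ^ (-(1 : ℝ)/2) := by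
    intro ω
    rw [hFT ω, norm_prod]
    refine Finset.prod_congr rfl fun j hj => ?_
    rw [show ((ω:ℂ) / ((b j:ℝ):ℂ)) = (((ω / b j : ℝ)):ℂ) by push_cast; ring,
      abs_one_div_lin (ω / b j)]
    congr 3
    ring
  refine ⟨hInt, habs, ∏ j ∈ Finset.range k, (max 1 ((2 * Real.pi / b j) ^ 2)) ^ (-(1:ℝ)/2),
    ∏ j ∈ Finset.range k, (min 1 ((2 * Real.pi / b j) ^ 2)) ^ (-(1:ℝ)/2), ?_, ?_, ?_⟩
  · exact Finset.prod_pos fun j hj =>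
      Real.rpow_pos_of_pos (lt_of_lt_of_le one_pos (le_max_left _ _)) _
  · exact Finset.prod_pos fun j hj =>
      Real.rpow_pos_of_pos (lt_min one_pos (hcpos j (Finset.mem_range.mp hj))) _
  · intro ω
    have ht : (0:ℝ) ≤ 1 + ω ^ 2 := by positivity
    constructor
    · rw [habs]
      calc (∏ j ∈ Finset.range k, (max 1 ((2 * Real.pi / b j) ^ 2)) ^ (-(1:ℝ)/2))
            * (1 + ω ^ 2) ^ (-(k:ℝ)/2)
          = ∏ j ∈ Finset.range k,
            ((max 1 ((2 * Real.pi / b j) ^ 2)) ^ (-(1:ℝ)/2) * (1 + ω ^ 2) ^ (-(1:ℝ)/2)) := by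
            rw [Finset.prod_mul_distrib, Finset.prod_const, Finset.card_range,
              rpow_half_pow _ ht]
        _ ≤ ∏ j ∈ Finset.range k, (1 + (2 * Real.pi * ω / b j) ^ 2) ^ (-(1:ℝ)/2) := by
            refine Finset.prod_le_prod (fun j hj => by positivity) fun j hj => ?_
            rw [hsq j ω]
            exact factor_lb (hcpos j (Finset.mem_range.mp hj)) ω
    · rw [habs]
      calc (∏ j ∈ Finset.range k, (1 + (2 * Real.pi * ω / b j) ^ 2) ^ (-(1:ℝ)/2))
          ≤ ∏ j ∈ Finset.range k,
            ((min 1 ((2 * Real.pi / b j) ^ 2)) ^ (-(1:ℝ)/2) * (1 + ω ^ 2) ^ (-(1:ℝ)/2)) := by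
            refine Finset.prod_le_prod (fun j hj => by positivity) fun j hj => ?_
            rw [hsq j ω]
            exact factor_ub (hcpos j (Finset.mem_range.mp hj)) ω
        _ = (∏ j ∈ Finset.range k, (min 1 ((2 * Real.pi / b j) ^ 2)) ^ (-(1:ℝ)/2))
            * (1 + ω ^ 2) ^ (-(k:ℝ)/2) := by
            rw [Finset.prod_mul_distrib, Finset.prod_const, Finset.card_range,
              rpow_half_pow _ ht]
end

section
/- Let 0 < β < 1/2, κ̄ > 0 and a > 0. Let K̂ : ℝ → ℂ be measurable with |K̂(ω)| ≤ κ̄ (1 + ω²)^{−β/2} for all ω, and for δ ∈ (0,1] let v̂(ω) = a (e^{2πiωδ} − 1)/(2πiω). Then there exists a constant C > 0 (depending only on β and κ̄) such that for every δ ∈ (0,1], ∫_{−∞}^{∞} |v̂(ω)|² |K̂(ω)|² dω ≤ C a² δ^{1+2β}. -/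
open MeasureTheory Real Set Filter

/-- Kullback–Leibler bound in the proof of Theorem 2, singular case `0 < β < 1/2`:
with `v̂(ω) = a (e^{2πiωδ} - 1)/(2πiω)` and `|K̂(ω)| ≤ κ̄ (1+ω²)^{-β/2}`, there is
`C > 0` (depending only on `β` and `κ̄`) such that for every `δ ∈ (0,1]`,
`∫ |v̂(ω)|² |K̂(ω)|² dω ≤ C a² δ^{1+2β}`. -/
theorem kl_bound_singular (β κ' a : ℝ) (hβ0 : 0 < β) (hβ : β < 1/2) (hκ : 0 < κ')
    (ha : 0 < a)
    (Khat : ℝ → ℂ) (hmeas : Measurable Khat)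
    (hK : ∀ ω : ℝ, ‖Khat ω‖ ≤ κ' * (1 + ω ^ 2) ^ (-β / 2)) :
    ∃ C : ℝ, 0 < C ∧ ∀ δ : ℝ, 0 < δ → δ ≤ 1 →
      ∫ ω : ℝ,
          (‖(a : ℂ) * (Complex.exp (2 * Real.pi * Complex.I * ω * δ) - 1) /
            (2 * Real.pi * Complex.I * ω)‖) ^ 2 * (‖Khat ω‖) ^ 2 ≤
        C * a ^ 2 * δ ^ (1 + 2 * β) := by
  have hπ : (0:ℝ) < Real.pi := Real.pi_pos
  have h1m2β : (0:ℝ) < 1 - 2*β := by linarith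
  have h1p2β : (0:ℝ) < 1 + 2*β := by linarith
  refine ⟨8*κ'^2*(2*Real.pi)^(2*β-1)/(1-2*β)
      + 2*κ'^2*(Real.pi^2)⁻¹*(2*Real.pi)^(1+2*β)/(1+2*β), ?_, ?_⟩
  · have h1 : (0:ℝ) < 8*κ'^2*(2*Real.pi)^(2*β-1)/(1-2*β) := by
      apply div_pos _ h1m2β
      have := Real.rpow_pos_of_pos (by positivity : (0:ℝ) < 2*Real.pi) (2*β-1)
      positivity
    have h2 : (0:ℝ) < 2*κ'^2*(Real.pi^2)⁻¹*(2*Real.pi)^(1+2*β)/(1+2*β) := by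
      apply div_pos _ h1p2β
      have := Real.rpow_pos_of_pos (by positivity : (0:ℝ) < 2*Real.pi) (1+2*β)
      positivity
    linarith
  intro δ hδ hδ1
  set T : ℝ := (2*Real.pi*δ)⁻¹ with hTdef
  have hT : 0 < T := by positivity
  set φ : ℝ → ℝ := fun x => if x ≤ T then 4*δ^2*x ^ (-(2*β)) else (Real.pi^2)⁻¹ * x ^ (-(2+2*β))
    with hφdef
  -- integrability of the pieces
  have hint1 : IntegrableOn (fun x : ℝ => x ^ (-(2*β))) (Ioc 0 T) := by
    rw [← intervalIntegrable_iff_integrableOn_Ioc_of_le hT.le]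
    exact intervalIntegral.intervalIntegrable_rpow' (by linarith)
  have hint2 : IntegrableOn (fun x : ℝ => x ^ (-(2+2*β))) (Ioi T) :=
    integrableOn_Ioi_rpow_of_lt (by linarith) hT
  have hφ1 : IntegrableOn φ (Ioc 0 T) := by
    apply IntegrableOn.congr_fun (hint1.const_mul (4*δ^2)) _ measurableSet_Ioc
    intro x hx; simp [hφdef, hx.2]
  have hφ2 : IntegrableOn φ (Ioi T) := by
    apply IntegrableOn.congr_fun (hint2.const_mul ((Real.pi^2)⁻¹)) _ measurableSet_Ioi
    intro x hx
    simp only [hφdef, if_neg (not_le.mpr (mem_Ioi.mp hx))]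
  have hφint : IntegrableOn φ (Ioi 0) := by
    rw [← Ioc_union_Ioi_eq_Ioi hT.le, integrableOn_union]
    exact ⟨hφ1, hφ2⟩
  have hφabs : IntegrableOn (fun ω : ℝ => φ |ω|) (Ioi 0) := by
    apply hφint.congr_fun _ measurableSet_Ioi
    intro x hx; simp only; rw [abs_of_pos (mem_Ioi.mp hx)]
  have hg_abs_int : Integrable (fun ω : ℝ => φ |ω|) := by
    rw [← integrableOn_univ, ← @Iic_union_Ioi _ _ (0:ℝ), integrableOn_union]
    refine ⟨?_, hφabs⟩
    rw [← (Measure.measurePreserving_neg (volume : Measure ℝ)).integrableOn_comp_preimage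
        (Homeomorph.neg ℝ).measurableEmbedding]
    simp only [Function.comp_def, abs_neg, neg_preimage, neg_Iic, neg_zero]
    rw [integrableOn_Ici_iff_integrableOn_Ioi]
    exact hφabs
  have hg_int : Integrable (fun ω : ℝ => κ'^2 * a^2 * φ |ω|) := hg_abs_int.const_mul _
  -- a.e. pointwise bound
  have h0 : ∀ᵐ ω : ℝ, ω ≠ 0 := by
    rw [ae_iff]
    simp only [ne_eq, not_not, Set.setOf_eq_eq_singleton]
    exact measure_singleton 0
  have key : ∀ᵐ ω : ℝ,
      (‖(a : ℂ) * (Complex.exp (2 * Real.pi * Complex.I * ω * δ) - 1) /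
        (2 * Real.pi * Complex.I * ω)‖) ^ 2 * (‖Khat ω‖) ^ 2
      ≤ κ'^2 * a^2 * φ (|ω|) := by
    filter_upwards [h0] with ω hω
    have hωpos : 0 < |ω| := abs_pos.mpr hω
    have habsz : ‖2*(Real.pi:ℂ)*Complex.I*(ω:ℂ)*(δ:ℂ)‖ = 2*Real.pi * |ω| * δ := by
      simp only [norm_mul, Complex.norm_two, Complex.norm_I, Complex.norm_real, Real.norm_eq_abs,
        abs_of_pos hπ, abs_of_pos hδ]
      ring
    have habsv : ‖(a : ℂ) * (Complex.exp (2 * Real.pi * Complex.I * ω * δ) - 1) /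
        (2 * Real.pi * Complex.I * ω)‖
        = a * ‖Complex.exp (2 * Real.pi * Complex.I * ω * δ) - 1‖
          / (2*Real.pi * |ω|) := by
      rw [norm_div, norm_mul]
      simp only [norm_mul, Complex.norm_two, Complex.norm_I, Complex.norm_real, Real.norm_eq_abs,
        abs_of_pos hπ, abs_of_pos ha]
      ring_nf
    have habsK2 : (‖Khat ω‖)^2 ≤ κ'^2 * |ω| ^ (-(2*β)) := by
      have hb : (0:ℝ) < 1 + ω^2 := by positivity
      have hsq : (ω^2 : ℝ) ^ (-β) = |ω| ^ (-(2*β)) := by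
        rw [← sq_abs, ← Real.rpow_natCast |ω| 2, ← Real.rpow_mul (abs_nonneg ω)]
        norm_num
      calc (‖Khat ω‖)^2 ≤ (κ' * (1+ω^2)^(-β/2))^2 := by
            apply pow_le_pow_left₀ (norm_nonneg _) (by simpa using hK ω)
        _ = κ'^2 * (1+ω^2)^(-β) := by
            rw [mul_pow, ← Real.rpow_natCast ((1+ω^2)^(-β/2)) 2, ← Real.rpow_mul hb.le]
            norm_num
        _ ≤ κ'^2 * |ω| ^ (-(2*β)) := by
            rw [← hsq]
            refine mul_le_mul_of_nonneg_left ?_ (sq_nonneg κ')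
            exact Real.rpow_le_rpow_of_nonpos (by positivity) (by linarith [sq_nonneg ω])
              (by linarith)
    have hKnn : (0:ℝ) ≤ (‖Khat ω‖)^2 := sq_nonneg _
    by_cases hcase : |ω| ≤ T
    · -- inner region
      have hz1 : ‖2*(Real.pi:ℂ)*Complex.I*(ω:ℂ)*(δ:ℂ)‖ ≤ 1 := by
        rw [habsz]
        have : 2*Real.pi * |ω| * δ ≤ 2*Real.pi*T*δ := by nlinarith [mul_pos hπ hδ]
        have hTδ : 2*Real.pi*T*δ = 1 := by
          rw [hTdef]; field_simp
        linarith
      have hE : ‖Complex.exp (2 * Real.pi * Complex.I * ω * δ) - 1‖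
          ≤ 2*(2*Real.pi * |ω| * δ) := by
        have := Complex.norm_exp_sub_one_le (x := 2*Real.pi*Complex.I*ω*δ) hz1
        rwa [habsz] at this
      have hv : ‖(a : ℂ) * (Complex.exp (2 * Real.pi * Complex.I * ω * δ) - 1) /
          (2 * Real.pi * Complex.I * ω)‖ ≤ 2*a*δ := by
        rw [habsv, div_le_iff₀ (by positivity)]
        nlinarith [norm_nonneg (Complex.exp (2 * Real.pi * Complex.I * ω * δ) - 1)]
      calc (‖(a : ℂ) * (Complex.exp (2 * Real.pi * Complex.I * ω * δ) - 1) /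
            (2 * Real.pi * Complex.I * ω)‖) ^ 2 * (‖Khat ω‖) ^ 2
          ≤ (2*a*δ)^2 * (κ'^2 * |ω| ^ (-(2*β))) := by
            apply mul_le_mul (pow_le_pow_left₀ (norm_nonneg _) hv 2) habsK2 hKnn
              (by positivity)
        _ = κ'^2 * a^2 * φ |ω| := by
            rw [hφdef]; simp only [if_pos hcase]; ring
    · -- outer region
      have hEabs : ‖Complex.exp (2 * Real.pi * Complex.I * ω * δ)‖ = 1 := by
        have hz : (2*(Real.pi:ℂ)*Complex.I*(ω:ℂ)*(δ:ℂ))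
            = ((2*Real.pi*ω*δ : ℝ):ℂ) * Complex.I := by push_cast; ring
        rw [hz, Complex.norm_exp_ofReal_mul_I]
      have hE2 : ‖Complex.exp (2 * Real.pi * Complex.I * ω * δ) - 1‖ ≤ 2 := by
        calc ‖Complex.exp (2 * Real.pi * Complex.I * ω * δ) - 1‖
            = ‖Complex.exp (2 * Real.pi * Complex.I * ω * δ) - 1‖ := rfl
          _ ≤ ‖Complex.exp (2 * Real.pi * Complex.I * ω * δ)‖ + ‖(1:ℂ)‖ := norm_sub_le _ _
          _ = 2 := by rw [hEabs]; norm_num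
      have hv2 : ‖(a : ℂ) * (Complex.exp (2 * Real.pi * Complex.I * ω * δ) - 1) /
          (2 * Real.pi * Complex.I * ω)‖ ≤ a / (Real.pi * |ω|) := by
        rw [habsv, div_le_div_iff₀ (by positivity) (by positivity)]
        nlinarith [mul_pos (mul_pos ha hπ) hωpos, hE2]
      have hsplit : |ω| ^ (-(2+2*β)) = (|ω| ^2)⁻¹ * |ω| ^ (-(2*β)) := by
        have : (-(2+2*β) : ℝ) = (-2) + (-(2*β)) := by ring
        rw [this, Real.rpow_add hωpos]
        congr 1
        rw [← Real.rpow_natCast |ω| 2, ← Real.rpow_neg (abs_nonneg ω)]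
        norm_num
      calc (‖(a : ℂ) * (Complex.exp (2 * Real.pi * Complex.I * ω * δ) - 1) /
            (2 * Real.pi * Complex.I * ω)‖) ^ 2 * (‖Khat ω‖) ^ 2
          ≤ (a / (Real.pi * |ω|))^2 * (κ'^2 * |ω| ^ (-(2*β))) := by
            apply mul_le_mul (pow_le_pow_left₀ (norm_nonneg _) hv2 2) habsK2 hKnn
              (by positivity)
        _ = κ'^2 * a^2 * φ |ω| := by
            rw [hφdef]; simp only [if_neg hcase, hsplit]
            field_simp
  -- conclude
  have hmono := integral_mono_of_nonneg
    (Eventually.of_forall (fun ω => by positivity)) hg_int key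
  refine hmono.trans ?_
  -- compute ∫ g
  have hIoc : ∫ x in Ioc (0:ℝ) T, φ x = 4*δ^2 * (T ^ (1-2*β) / (1-2*β)) := by
    rw [setIntegral_congr_fun measurableSet_Ioc
      (g := fun x : ℝ => 4*δ^2 * x ^ (-(2*β))) (fun x hx => by simp [hφdef, hx.2]),
      integral_const_mul, ← intervalIntegral.integral_of_le hT.le,
      integral_rpow (Or.inl (by linarith : (-1:ℝ) < -(2*β)))]
    rw [Real.zero_rpow (ne_of_gt (by linarith : (0:ℝ) < -(2*β) + 1))]
    rw [show (-(2*β) + 1 : ℝ) = 1 - 2*β by ring]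
    ring
  have hIoi : ∫ x in Ioi T, φ x = (Real.pi^2)⁻¹ * (T ^ (-(1+2*β)) / (1+2*β)) := by
    rw [setIntegral_congr_fun measurableSet_Ioi
      (g := fun x : ℝ => (Real.pi^2)⁻¹ * x ^ (-(2+2*β)))
      (fun x hx => by simp only [hφdef, if_neg (not_le.mpr (mem_Ioi.mp hx))]),
      integral_const_mul, integral_Ioi_rpow_of_lt (by linarith) hT]
    congr 1
    rw [show (-(2+2*β) + 1 : ℝ) = -(1+2*β) by ring]
    rw [neg_div, div_neg, neg_neg]
  have hsum : ∫ x in Ioi (0:ℝ), φ x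
      = 4*δ^2 * (T ^ (1-2*β) / (1-2*β)) + (Real.pi^2)⁻¹ * (T ^ (-(1+2*β)) / (1+2*β)) := by
    rw [← Ioc_union_Ioi_eq_Ioi hT.le,
      setIntegral_union Ioc_disjoint_Ioi_same measurableSet_Ioi hφ1 hφ2, hIoc, hIoi]
  have h2πδ : (0:ℝ) < 2*Real.pi*δ := by positivity
  have hT1 : T ^ (1-2*β) = (2*Real.pi)^(2*β-1) * δ^(2*β-1) := by
    rw [hTdef, Real.inv_rpow h2πδ.le, ← Real.rpow_neg h2πδ.le,
      show (-(1-2*β):ℝ) = 2*β-1 by ring, Real.mul_rpow (by positivity) hδ.le]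
  have hT2 : T ^ (-(1+2*β)) = (2*Real.pi)^(1+2*β) * δ^(1+2*β) := by
    rw [hTdef, Real.inv_rpow h2πδ.le, ← Real.rpow_neg h2πδ.le, neg_neg,
      Real.mul_rpow (by positivity) hδ.le]
  have hδ2 : δ^2 * δ^(2*β-1) = δ^(1+2*β) := by
    rw [← Real.rpow_natCast δ 2, ← Real.rpow_add hδ]
    push_cast
    congr 1
    ring
  calc ∫ ω : ℝ, κ'^2 * a^2 * φ |ω|
      = κ'^2 * a^2 * (2 * ∫ x in Ioi (0:ℝ), φ x) := by
        rw [integral_const_mul, integral_comp_abs]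
    _ = (8*κ'^2*(2*Real.pi)^(2*β-1)/(1-2*β)
          + 2*κ'^2*(Real.pi^2)⁻¹*(2*Real.pi)^(1+2*β)/(1+2*β)) * a ^ 2 * δ ^ (1 + 2 * β) := by
        rw [hsum, hT1, hT2, ← hδ2]
        ring
    _ ≤ _ := le_rfl
end
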